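/- arXiv:2204.06460 — 10 statements merged into one kernel-verified Lean document; each statement's English description precedes it below -/
import Mathlib

section
/- Let G be a (P_5, K_3)-free graph, and let S and T be disjoint stable sets of G such that every vertex of T has a neighbour in S (T may be empty). Then G admits a proper 3-coloring in which all vertices of S receive color 1 and all vertices of T receive color 2. -/
open SimpleGraph

/-- The paw: a triangle 0,1,2 plus vertex 3 adjacent only to 0. -/
def pawGraph : SimpleGraph (Fin 4) :=
  SimpleGraph.fromEdgeSet {s(0,1), s(0,2), s(1,2), s(0,3)}

/-- The HVN: a K₄ on 0,1,2,3 plus vertex 4 adjacent to exactly 0 and 1. -/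
def hvnGraph : SimpleGraph (Fin 5) :=
  SimpleGraph.fromEdgeSet {s(0,1), s(0,2), s(0,3), s(1,2), s(1,3), s(2,3), s(4,0), s(4,1)}

/-- The T-5-wheel: 5-cycle 0-1-2-3-4-0 plus vertex 5 adjacent to the three consecutive
vertices 4, 0, 1. -/
def t5WheelGraph : SimpleGraph (Fin 6) :=
  SimpleGraph.fromEdgeSet {s(0,1), s(1,2), s(2,3), s(3,4), s(4,0), s(5,4), s(5,0), s(5,1)}

/-- The Y-5-wheel: 5-cycle 0-1-2-3-4-0 plus vertex 5 adjacent to 0, 1, 3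
(three non-consecutive vertices). -/
def y5WheelGraph : SimpleGraph (Fin 6) :=
  SimpleGraph.fromEdgeSet {s(0,1), s(1,2), s(2,3), s(3,4), s(4,0), s(5,0), s(5,1), s(5,3)}

/-- `G` contains an induced copy of `H`: an injection preserving and reflecting adjacency. -/
def ContainsInduced {V W : Type*} (G : SimpleGraph V) (H : SimpleGraph W) : Prop :=
  ∃ f : W ↪ V, ∀ a b : W, H.Adj a b ↔ G.Adj (f a) (f b)

/-- `G` is `H`-free: no induced copy of `H`. -/
def InducedFree {V W : Type*} (G : SimpleGraph V) (H : SimpleGraph W) : Prop :=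
  ¬ ContainsInduced G H

/-- `v` lists the vertices of an induced (chordless) 5-cycle of `G`, in order. -/
def IsInducedC5 {V : Type*} (G : SimpleGraph V) (v : ZMod 5 → V) : Prop :=
  Function.Injective v ∧ ∀ i j : ZMod 5, G.Adj (v i) (v j) ↔ (j = i + 1 ∨ j = i - 1)

/-! Extend `S` to a maximal stable set `M` avoiding `T`, then `T` to a maximal stable set `N`
avoiding `M`, and colour `M`, `N` and the remaining vertices `0`, `1`, `2`. Every vertex outside
`M` has a neighbour in `M` (for vertices of `T` by hypothesis), and every vertex outside `M ∪ N`
has one in `N`. If two adjacent vertices `u`, `w` remained, triangle-freeness and `P₅`-freeness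
would give paths `u - t - m - w` and `w - t' - m' - u` with `t, t' ∈ N` and `m, m' ∈ M`, and
`t - m - w - t' - m'` would be an induced `P₅`. -/

lemma InducedFree.false_of_induced_path {V : Type*} {G : SimpleGraph V}
    (hP5 : InducedFree G (pathGraph 5)) {v₀ v₁ v₂ v₃ v₄ : V}
    (h₀₁ : G.Adj v₀ v₁) (h₁₂ : G.Adj v₁ v₂) (h₂₃ : G.Adj v₂ v₃) (h₃₄ : G.Adj v₃ v₄)
    (h₀₂ : ¬ G.Adj v₀ v₂) (h₀₃ : ¬ G.Adj v₀ v₃) (h₀₄ : ¬ G.Adj v₀ v₄)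
    (h₁₃ : ¬ G.Adj v₁ v₃) (h₁₄ : ¬ G.Adj v₁ v₄) (h₂₄ : ¬ G.Adj v₂ v₄) : False := by
  refine hP5 ⟨⟨![v₀, v₁, v₂, v₃, v₄], fun a b hab => ?_⟩, fun a b => ?_⟩
  · fin_cases a <;> fin_cases b <;> simp_all [G.adj_comm]
  · change _ ↔ G.Adj (![v₀, v₁, v₂, v₃, v₄] a) (![v₀, v₁, v₂, v₃, v₄] b)
    fin_cases a <;> fin_cases b <;> simp [pathGraph_adj, G.adj_comm, *]

namespace SimpleGraph

variable {V : Type*} {G : SimpleGraph V}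

lemma IsIndepSet.not_adj {s : Set V} (h : G.IsIndepSet s) {v w : V} (hv : v ∈ s) (hw : w ∈ s) :
    ¬ G.Adj v w :=
  fun hvw => h hv hw hvw.ne hvw

lemma CliqueFree.not_adj_of_adj_of_adj (h : G.CliqueFree 3) {x y z : V} (hxy : G.Adj x y)
    (hxz : G.Adj x z) : ¬ G.Adj y z :=
  fun hyz => isIndepSet_neighborSet_of_triangleFree G h x hxy hxz hyz.ne hyz

lemma exists_isIndepSet_superset_dominating {A B : Set V} (hA : G.IsIndepSet A)
    (hAB : Disjoint A B) :
    ∃ M, A ⊆ M ∧ Disjoint M B ∧ G.IsIndepSet M ∧ ∀ v ∉ M, v ∉ B → ∃ m ∈ M, G.Adj v m := by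
  obtain ⟨M, hAM, hMax⟩ := zorn_subset_nonempty {I | Disjoint I B ∧ G.IsIndepSet I}
    (fun c hc hchain _ => ⟨⋃₀ c,
      ⟨Set.disjoint_sUnion_left.mpr fun I hI => (hc hI).1,
        (Set.pairwise_sUnion hchain.directedOn).mpr fun I hI => (hc hI).2⟩,
      fun _ => Set.subset_sUnion_of_mem⟩) A ⟨hAB, hA⟩
  obtain ⟨hMB, hM⟩ := hMax.prop
  refine ⟨M, hAM, hMB, hM, fun v hvM hvB => ?_⟩
  by_contra! hv
  have hvM' : insert v M ∈ {I | Disjoint I B ∧ G.IsIndepSet I} :=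
    ⟨Set.disjoint_insert_left.mpr ⟨hvB, hMB⟩,
      hM.insert fun m hm _ => ⟨hv m hm, fun h => hv m hm h.symm⟩⟩
  exact hvM (hMax.mem_of_prop_insert hvM')

variable {M N : Set V}

lemma exists_mem_adj_adj_of_adj_adj (hP5 : InducedFree G (pathGraph 5))
    (hK3 : G.CliqueFree 3) (hM : G.IsIndepSet M) (hdom : ∀ v ∉ M, ∃ m ∈ M, G.Adj v m)
    {t u w : V} (htu : G.Adj t u) (huw : G.Adj u w) (ht : t ∉ M) (hw : w ∉ M) :
    ∃ m ∈ M, G.Adj t m ∧ G.Adj m w := by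
  obtain ⟨m, hm, htm⟩ := hdom t ht
  obtain ⟨m', hm', hwm'⟩ := hdom w hw
  by_cases hmw : G.Adj m w
  · exact ⟨m, hm, htm, hmw⟩
  by_cases htm' : G.Adj t m'
  · exact ⟨m', hm', htm', hwm'.symm⟩
  exact (hP5.false_of_induced_path htm.symm htu huw hwm'
    (hK3.not_adj_of_adj_of_adj htm htu) hmw (hM.not_adj hm hm')
    (hK3.not_adj_of_adj_of_adj htu.symm huw) htm' (hK3.not_adj_of_adj_of_adj huw.symm hwm')).elim

lemma isIndepSet_compl_union_of_dominating (hP5 : InducedFree G (pathGraph 5))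
    (hK3 : G.CliqueFree 3) (hM : G.IsIndepSet M) (hN : G.IsIndepSet N) (hNM : Disjoint N M)
    (hdomM : ∀ v ∉ M, ∃ m ∈ M, G.Adj v m) (hdomN : ∀ v ∉ N, v ∉ M → ∃ n ∈ N, G.Adj v n) :
    G.IsIndepSet (M ∪ N)ᶜ := by
  intro u hu w hw _ huw
  simp only [Set.mem_compl_iff, Set.mem_union, not_or] at hu hw
  obtain ⟨t, ht, hut⟩ := hdomN u hu.2 hu.1
  obtain ⟨t', ht', hwt'⟩ := hdomN w hw.2 hw.1
  obtain ⟨m, hm, htm, hmw⟩ := exists_mem_adj_adj_of_adj_adj hP5 hK3 hM hdomM hut.symm huw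
    (hNM.notMem_of_mem_left ht) hw.1
  obtain ⟨m', hm', ht'm', hm'u⟩ := exists_mem_adj_adj_of_adj_adj hP5 hK3 hM hdomM
    hwt'.symm huw.symm (hNM.notMem_of_mem_left ht') hu.1
  exact hP5.false_of_induced_path htm hmw hwt' ht'm'
    (hK3.not_adj_of_adj_of_adj hut huw) (hN.not_adj ht ht')
    (hK3.not_adj_of_adj_of_adj hut hm'u.symm) (hK3.not_adj_of_adj_of_adj hmw.symm hwt')
    (hM.not_adj hm hm') (hK3.not_adj_of_adj_of_adj huw hm'u.symm)

lemma exists_coloring_fin_three_of_isIndepSet (hM : G.IsIndepSet M) (hN : G.IsIndepSet N)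
    (hNM : Disjoint N M) (hR : G.IsIndepSet (M ∪ N)ᶜ) :
    ∃ c : G.Coloring (Fin 3), (∀ v ∈ M, c v = 0) ∧ (∀ v ∈ N, c v = 1) := by
  classical
  refine ⟨Coloring.mk (fun v => if v ∈ M then 0 else if v ∈ N then 1 else 2) fun {v w} hvw => ?_,
    fun v hv => if_pos hv, fun v hv => (if_neg (hNM.notMem_of_mem_left hv)).trans (if_pos hv)⟩
  split_ifs <;> simp only [ne_eq, Fin.reduceEq, not_false_eq_true, not_true_eq_false]
  · exact hM.not_adj ‹v ∈ M› ‹w ∈ M› hvw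
  · exact hN.not_adj ‹v ∈ N› ‹w ∈ N› hvw
  · exact hR.not_adj (·.elim ‹v ∉ M› ‹v ∉ N›) (·.elim ‹w ∉ M› ‹w ∉ N›) hvw

end SimpleGraph

/-- A (P₅,K₃)-free graph has a proper 3-coloring giving a prescribed stable set `S` color 0
and a prescribed stable set `T`, each of whose vertices has a neighbour in `S`, color 1. -/
theorem p5_k3_free_three_coloring {V : Type*} (G : SimpleGraph V)
    (hP5 : InducedFree G (pathGraph 5)) (hK3 : G.CliqueFree 3)
    (S T : Set V) (hdisj : Disjoint S T)
    (hS : ∀ u ∈ S, ∀ w ∈ S, ¬ G.Adj u w) (hT : ∀ u ∈ T, ∀ w ∈ T, ¬ G.Adj u w)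
    (hTS : ∀ t ∈ T, ∃ s ∈ S, G.Adj t s) :
    ∃ c : G.Coloring (Fin 3), (∀ u ∈ S, c u = 0) ∧ (∀ u ∈ T, c u = 1) := by
  obtain ⟨M, hSM, hMT, hM, hdomM⟩ :=
    exists_isIndepSet_superset_dominating (fun u hu w hw _ => hS u hu w hw) hdisj
  have hdomM' : ∀ v ∉ M, ∃ m ∈ M, G.Adj v m := fun v hvM => by
    by_cases hvT : v ∈ T
    · obtain ⟨s, hs, hvs⟩ := hTS v hvT
      exact ⟨s, hSM hs, hvs⟩
    · exact hdomM v hvM hvT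
  obtain ⟨N, hTN, hNM, hN, hdomN⟩ :=
    exists_isIndepSet_superset_dominating (fun u hu w hw _ => hT u hu w hw) hMT.symm
  obtain ⟨c, hcM, hcN⟩ := exists_coloring_fin_three_of_isIndepSet hM hN hNM
    (isIndepSet_compl_union_of_dominating hP5 hK3 hM hN hNM hdomM' hdomN)
  exact ⟨c, fun u hu => hcM u (hSM hu), fun u hu => hcN u (hTN hu)⟩
end

section
/- Let G be a P_5-free graph containing an induced 5-cycle C = v_1 v_2 v_3 v_4 v_5 v_1. Then every vertex u of G has neighbourhood in C equal to one of: the empty set; {v_{i-1}, v_{i+1}} for some i; {v_{i-1}, v_i, v_{i+1}} for some i; {v_{i-2}, v_i, v_{i+2}} for some i; {v_{i-1}, v_i, v_{i+1}, v_{i+2}} for some i; or all of V(C), where indices are taken modulo 5. -/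
open SimpleGraph

/-- The neighbourhood of `u` on the 5-cycle with vertices `v i`. -/
def cycNbhd {V : Type*} (G : SimpleGraph V) (v : ZMod 5 → V) (u : V) : Set V :=
  {w | (∃ i, w = v i) ∧ G.Adj u w}


/-! If `u` is adjacent to `v i` but to none of `v (i + 1)`, `v (i + 2)`, `v (i + 3)`, then
`u, v i, v (i + 1), v (i + 2), v (i + 3)` is an induced `P₅`. So, going round the cycle, at most
two consecutive non-neighbours of `u` follow each neighbour, and a finite check shows that the
subsets of `ZMod 5` with this property are exactly the listed patterns. -/

section

variable {V : Type*} {G : SimpleGraph V}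

lemma InducedFree.false_of_inducedPath (hP5 : InducedFree G (pathGraph 5)) {a b c d e : V}
    (hab : G.Adj a b) (hbc : G.Adj b c) (hcd : G.Adj c d) (hde : G.Adj d e)
    (hac : ¬G.Adj a c) (had : ¬G.Adj a d) (hae : ¬G.Adj a e)
    (hbd : ¬G.Adj b d) (hbe : ¬G.Adj b e) (hce : ¬G.Adj c e) : False := by
  set f : Fin 5 → V := ![a, b, c, d, e]
  have adj_iff : ∀ x y, (pathGraph 5).Adj x y ↔ G.Adj (f x) (f y) := by
    intro x y
    fin_cases x <;> fin_cases y <;>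
      simp [f, pathGraph_adj, G.adj_comm, hab, hbc, hcd, hde, hac, had, hae, hbd, hbe, hce]
  have path_no_twins : ∀ x y : Fin 5,
      (∀ z : Fin 5, (pathGraph 5).Adj x z ↔ (pathGraph 5).Adj y z) → x = y := by
    simp only [pathGraph_adj]
    decide
  have f_inj : Function.Injective f := fun x y hxy =>
    path_no_twins x y fun z => by rw [adj_iff, adj_iff, hxy]
  exact hP5 ⟨⟨f, f_inj⟩, adj_iff⟩

variable {v : ZMod 5 → V}

lemma IsInducedC5.rotate (hC : IsInducedC5 G v) (i : ZMod 5) :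
    IsInducedC5 G (fun j => v (i + j)) :=
  ⟨hC.1.comp (add_right_injective i), fun a b => by
    simp only [hC.2, add_assoc, add_sub_assoc, add_right_inj]⟩

lemma IsInducedC5.adj_add_one_or_add_two_or_add_three (hP5 : InducedFree G (pathGraph 5))
    (hC : IsInducedC5 G v) {u : V} {i : ZMod 5} (hu : G.Adj u (v i)) :
    G.Adj u (v (i + 1)) ∨ G.Adj u (v (i + 2)) ∨ G.Adj u (v (i + 3)) := by
  by_contra! ⟨h1, h2, h3⟩
  have adj (a b : ZMod 5) (hab : b = a + 1) : G.Adj (v (i + a)) (v (i + b)) :=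
    ((hC.rotate i).2 a b).2 (Or.inl hab)
  have not_adj (a b : ZMod 5) (hab : ¬(b = a + 1 ∨ b = a - 1)) :
      ¬G.Adj (v (i + a)) (v (i + b)) :=
    fun h => hab (((hC.rotate i).2 a b).1 h)
  rw [← add_zero i] at hu
  exact hP5.false_of_inducedPath hu (adj 0 1 rfl) (adj 1 2 rfl) (adj 2 3 rfl) h1 h2 h3
    (not_adj 0 2 (by decide)) (not_adj 0 3 (by decide)) (not_adj 1 3 (by decide))

lemma cycNbhd_eq_image {u : V} {S : Finset (ZMod 5)} (hS : ∀ i, i ∈ S ↔ G.Adj u (v i)) :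
    cycNbhd G v u = v '' S := by
  ext w
  simp only [cycNbhd, Set.mem_ofPred_eq, Set.mem_image, Finset.mem_coe, hS]
  constructor
  · rintro ⟨⟨i, rfl⟩, h⟩
    exact ⟨i, h, rfl⟩
  · rintro ⟨i, h, rfl⟩
    exact ⟨⟨i, rfl⟩, h⟩

end

lemma finset_zmod_five_cases_of_gap_le_three (S : Finset (ZMod 5))
    (hS : ∀ i ∈ S, i + 1 ∈ S ∨ i + 2 ∈ S ∨ i + 3 ∈ S) :
    S = ∅ ∨ (∃ i, S = {i - 1, i + 1}) ∨ (∃ i, S = {i - 1, i, i + 1}) ∨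
      (∃ i, S = {i - 2, i, i + 2}) ∨ (∃ i, S = {i - 1, i, i + 1, i + 2}) ∨
      S = Finset.univ := by
  revert S
  decide

/-- In a P₅-free graph, the neighbourhood of any vertex on an induced 5-cycle is one of
the listed patterns. -/
theorem p5_free_c5_neighbourhoods {V : Type*} (G : SimpleGraph V)
    (hP5 : InducedFree G (pathGraph 5)) (v : ZMod 5 → V) (hC : IsInducedC5 G v) :
    ∀ u : V,
      cycNbhd G v u = (∅ : Set V) ∨
      (∃ i, cycNbhd G v u = {v (i - 1), v (i + 1)}) ∨
      (∃ i, cycNbhd G v u = {v (i - 1), v i, v (i + 1)}) ∨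
      (∃ i, cycNbhd G v u = {v (i - 2), v i, v (i + 2)}) ∨
      (∃ i, cycNbhd G v u = {v (i - 1), v i, v (i + 1), v (i + 2)}) ∨
      cycNbhd G v u = Set.range v := by
  classical
  intro u
  set S : Finset (ZMod 5) := {i | G.Adj u (v i)}
  have hS : ∀ i, i ∈ S ↔ G.Adj u (v i) := by simp [S]
  have gap : ∀ i ∈ S, i + 1 ∈ S ∨ i + 2 ∈ S ∨ i + 3 ∈ S := by
    simpa only [hS] using fun i => hC.adj_add_one_or_add_two_or_add_three hP5
  rw [cycNbhd_eq_image hS]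
  rcases finset_zmod_five_cases_of_gap_le_three S gap with
    h | ⟨i, h⟩ | ⟨i, h⟩ | ⟨i, h⟩ | ⟨i, h⟩ | h <;>
    simp only [h, Finset.coe_insert, Finset.coe_singleton, Finset.coe_empty, Finset.coe_univ,
      Set.image_insert_eq, Set.image_singleton, Set.image_empty, Set.image_univ]
  · exact Or.inl trivial
  · exact Or.inr <| Or.inl ⟨i, rfl⟩
  · exact Or.inr <| Or.inr <| Or.inl ⟨i, rfl⟩
  · exact Or.inr <| Or.inr <| Or.inr <| Or.inl ⟨i, rfl⟩
  · exact Or.inr <| Or.inr <| Or.inr <| Or.inr <| Or.inl ⟨i, rfl⟩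
  · exact Or.inr <| Or.inr <| Or.inr <| Or.inr <| Or.inr trivial
end

section
/- Let G be a (P_5, HVN)-free graph containing an induced 5-cycle C = v_1 v_2 v_3 v_4 v_5 v_1, and let T be the set of vertices adjacent to all five vertices of C and P^i the set of vertices u with N_C(u) = {v_{i-1}, v_i, v_{i+1}, v_{i+2}} (indices mod 5). Then T ∪ (⋃_{1≤i≤5} P^i) is a stable set. -/
open SimpleGraph

set_option maxHeartbeats 1000000 in
/-- Explicit list of the (ordered) edges of the HVN. -/
lemma hvn_adj_iff : ∀ p q : Fin 5, hvnGraph.Adj p q ↔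
    ((p,q) ∈ [((0:Fin 5),(1:Fin 5)),(0,2),(0,3),(1,2),(1,3),(2,3),(4,0),(4,1),
      (1,0),(2,0),(3,0),(2,1),(3,1),(3,2),(0,4),(1,4)]) := by
  intro p q
  fin_cases p <;> fin_cases q <;> simp [hvnGraph] <;> decide

set_option maxHeartbeats 1000000 in
/-- From a K₄ `{a,b,x,y}` together with a vertex `z` adjacent to exactly `a` and `b`
among them, we get an induced HVN. -/
lemma build_hvn {V : Type*} (G : SimpleGraph V) (a b x y z : V)
    (hab : G.Adj a b) (hax : G.Adj a x) (hay : G.Adj a y)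
    (hbx : G.Adj b x) (hby : G.Adj b y) (hxy : G.Adj x y)
    (hza : G.Adj z a) (hzb : G.Adj z b) (hzx : ¬ G.Adj z x) (hzy : ¬ G.Adj z y) :
    ContainsInduced G hvnGraph := by
  have hxz : x ≠ z := fun h => hzy (h ▸ hxy)
  have hyz : y ≠ z := fun h => hzx (h ▸ hxy.symm)
  have hinj : Function.Injective ![a,b,x,y,z] := by
    intro p q hpq
    fin_cases p <;> fin_cases q <;> simp_all
  refine ⟨⟨![a,b,x,y,z], hinj⟩, ?_⟩
  intro p q
  rw [hvn_adj_iff]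
  fin_cases p <;> fin_cases q <;>
    simp only [Function.Embedding.coeFn_mk, Matrix.cons_val_zero, Matrix.cons_val_one,
      Matrix.head_cons, Matrix.cons_val_two, Matrix.tail_cons, Matrix.cons_val_three,
      Matrix.cons_val_four] <;>
    first
      | exact iff_of_true (by decide) hab | exact iff_of_true (by decide) hab.symm
      | exact iff_of_true (by decide) hax | exact iff_of_true (by decide) hax.symm
      | exact iff_of_true (by decide) hay | exact iff_of_true (by decide) hay.symm
      | exact iff_of_true (by decide) hbx | exact iff_of_true (by decide) hbx.symm
      | exact iff_of_true (by decide) hby | exact iff_of_true (by decide) hby.symm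
      | exact iff_of_true (by decide) hxy | exact iff_of_true (by decide) hxy.symm
      | exact iff_of_true (by decide) hza | exact iff_of_true (by decide) hza.symm
      | exact iff_of_true (by decide) hzb | exact iff_of_true (by decide) hzb.symm
      | exact iff_of_false (by decide) hzx
      | exact iff_of_false (by decide) (fun h => hzx h.symm)
      | exact iff_of_false (by decide) hzy
      | exact iff_of_false (by decide) (fun h => hzy h.symm)
      | exact iff_of_false (by decide) (G.irrefl)

/-- A vertex whose cycle-neighbourhood is all of the cycle is adjacent to every `v j`. -/
lemma charT {V : Type*} {G : SimpleGraph V} {v : ZMod 5 → V} {u : V}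
    (h : cycNbhd G v u = Set.range v) : ∀ j : ZMod 5, G.Adj u (v j) := by
  intro j
  have hm : v j ∈ cycNbhd G v u := by rw [h]; exact ⟨j, rfl⟩
  exact hm.2

/-- A vertex whose cycle-neighbourhood is `{v(m-1), v m, v(m+1), v(m+2)}` is adjacent to
`v (m+c)` exactly when `c ∈ {-1,0,1,2}`. -/
lemma charP {V : Type*} {G : SimpleGraph V} {v : ZMod 5 → V}
    (inj : Function.Injective v) {u : V} {m : ZMod 5}
    (h : cycNbhd G v u = {v (m-1), v m, v (m+1), v (m+2)}) :
    ∀ c : ZMod 5, G.Adj u (v (m+c)) ↔ (c = -1 ∨ c = 0 ∨ c = 1 ∨ c = 2) := by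
  intro c
  have hmem : G.Adj u (v (m+c)) ↔ v (m+c) ∈ cycNbhd G v u :=
    ⟨fun hh => ⟨⟨m+c, rfl⟩, hh⟩, fun hh => hh.2⟩
  rw [hmem, h]
  simp only [Set.mem_insert_iff, Set.mem_singleton_iff]
  constructor
  · rintro (hh|hh|hh|hh)
    · exact Or.inl (by linear_combination inj hh)
    · exact Or.inr (Or.inl (by linear_combination inj hh))
    · exact Or.inr (Or.inr (Or.inl (by linear_combination inj hh)))
    · exact Or.inr (Or.inr (Or.inr (by linear_combination inj hh)))
  · rintro (hh|hh|hh|hh)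
    · exact Or.inl (by rw [show m + c = m - 1 by linear_combination hh])
    · exact Or.inr (Or.inl (by rw [show m + c = m by linear_combination hh]))
    · exact Or.inr (Or.inr (Or.inl (by rw [show m + c = m + 1 by linear_combination hh])))
    · exact Or.inr (Or.inr (Or.inr (by rw [show m + c = m + 2 by linear_combination hh])))

/-- Cycle adjacency in shifted coordinates. -/
lemma cycAdj {V : Type*} {G : SimpleGraph V} {v : ZMod 5 → V} (hC : IsInducedC5 G v) :
    ∀ i c d : ZMod 5, G.Adj (v (i+c)) (v (i+d)) ↔ (d - c = 1 ∨ d - c = -1) := by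
  intro i c d
  rw [hC.2]
  constructor
  · rintro (h|h)
    · exact Or.inl (by linear_combination h)
    · exact Or.inr (by linear_combination h)
  · rintro (h|h)
    · exact Or.inl (by linear_combination h)
    · exact Or.inr (by linear_combination h)

/-- In a (P₅, HVN)-free graph with an induced 5-cycle, the set
`T ∪ ⋃ i, P^i` is stable. -/
theorem t_union_p_stable {V : Type*} (G : SimpleGraph V)
    (hP5 : InducedFree G (pathGraph 5)) (hHVN : InducedFree G hvnGraph)
    (v : ZMod 5 → V) (hC : IsInducedC5 G v) :
    ∀ a ∈ {u : V | cycNbhd G v u = Set.range v ∨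
        ∃ i, cycNbhd G v u = {v (i - 1), v i, v (i + 1), v (i + 2)}},
      ∀ b ∈ {u : V | cycNbhd G v u = Set.range v ∨
        ∃ i, cycNbhd G v u = {v (i - 1), v i, v (i + 1), v (i + 2)}},
      ¬ G.Adj a b := by
  intro a ha b hb hab
  have inj := hC.1
  have hV := cycAdj hC
  rcases ha with haT | ⟨i, hi⟩
  · -- a ∈ T
    have hA := charT haT
    rcases hb with hbT | ⟨j, hj⟩
    · -- b ∈ T
      have hB := charT hbT
      exact hHVN (build_hvn G a b (v (0+0)) (v (0+1)) (v (0+3))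
        hab (hA _) (hA _) (hB _) (hB _)
        ((hV 0 0 1).2 (by decide))
        (hA _).symm (hB _).symm
        (fun h => absurd ((hV 0 3 0).1 h) (by decide))
        (fun h => absurd ((hV 0 3 1).1 h) (by decide)))
    · -- b ∈ P^j
      have hB := charP inj hj
      exact hHVN (build_hvn G a b (v (j+(-1))) (v (j+0)) (v (j+2))
        hab (hA _) (hA _)
        ((hB (-1)).2 (by decide)) ((hB 0).2 (by decide))
        ((hV j (-1) 0).2 (by decide))
        (hA _).symm ((hB 2).2 (by decide)).symm
        (fun h => absurd ((hV j 2 (-1)).1 h) (by decide))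
        (fun h => absurd ((hV j 2 0).1 h) (by decide)))
  · -- a ∈ P^i
    have hA := charP inj hi
    rcases hb with hbT | ⟨j, hj⟩
    · -- b ∈ T : symmetric to previous case
      have hB := charT hbT
      exact hHVN (build_hvn G b a (v (i+(-1))) (v (i+0)) (v (i+2))
        hab.symm (hB _) (hB _)
        ((hA (-1)).2 (by decide)) ((hA 0).2 (by decide))
        ((hV i (-1) 0).2 (by decide))
        (hB _).symm ((hA 2).2 (by decide)).symm
        (fun h => absurd ((hV i 2 (-1)).1 h) (by decide))
        (fun h => absurd ((hV i 2 0).1 h) (by decide)))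
    · -- both in P
      have hB := charP inj hj
      have hcases := (by decide : ∀ x : ZMod 5, x=0∨x=1∨x=2∨x=3∨x=4) (j - i)
      rcases hcases with hk|hk|hk|hk|hk
      · -- j = i
        have hj' : j = i + 0 := by linear_combination hk
        subst hj'
        have hB2 : ∀ c : ZMod 5, G.Adj b (v (i + c)) ↔
            (c - 0 = -1 ∨ c - 0 = 0 ∨ c - 0 = 1 ∨ c - 0 = 2) := fun c => by
          rw [show i + c = (i+0) + (c - 0) by ring]; exact hB _
        exact hHVN (build_hvn G a b (v (i+(-1))) (v (i+0)) (v (i+2))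
          hab ((hA (-1)).2 (by decide)) ((hA 0).2 (by decide))
          ((hB2 (-1)).2 (by decide)) ((hB2 0).2 (by decide))
          ((hV i (-1) 0).2 (by decide))
          ((hA 2).2 (by decide)).symm ((hB2 2).2 (by decide)).symm
          (fun h => absurd ((hV i 2 (-1)).1 h) (by decide))
          (fun h => absurd ((hV i 2 0).1 h) (by decide)))
      · -- j = i + 1
        have hj' : j = i + 1 := by linear_combination hk
        subst hj'
        have hB2 : ∀ c : ZMod 5, G.Adj b (v (i + c)) ↔
            (c - 1 = -1 ∨ c - 1 = 0 ∨ c - 1 = 1 ∨ c - 1 = 2) := fun c => by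
          rw [show i + c = (i+1) + (c - 1) by ring]; exact hB _
        exact hHVN (build_hvn G b (v (i+2)) a (v (i+1)) (v (i+3))
          ((hB2 2).2 (by decide)) hab.symm ((hB2 1).2 (by decide))
          ((hA 2).2 (by decide)).symm ((hV i 2 1).2 (by decide))
          ((hA 1).2 (by decide))
          ((hB2 3).2 (by decide)).symm ((hV i 3 2).2 (by decide))
          (fun h => absurd ((hA 3).1 h.symm) (by decide))
          (fun h => absurd ((hV i 3 1).1 h) (by decide)))
      · -- j = i + 2
        have hj' : j = i + 2 := by linear_combination hk
        subst hj'
        have hB2 : ∀ c : ZMod 5, G.Adj b (v (i + c)) ↔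
            (c - 2 = -1 ∨ c - 2 = 0 ∨ c - 2 = 1 ∨ c - 2 = 2) := fun c => by
          rw [show i + c = (i+2) + (c - 2) by ring]; exact hB _
        exact hHVN (build_hvn G a (v (i+1)) b (v (i+2)) (v (i+0))
          ((hA 1).2 (by decide)) hab ((hA 2).2 (by decide))
          ((hB2 1).2 (by decide)).symm ((hV i 1 2).2 (by decide))
          ((hB2 2).2 (by decide))
          ((hA 0).2 (by decide)).symm ((hV i 0 1).2 (by decide))
          (fun h => absurd ((hB2 0).1 h.symm) (by decide))
          (fun h => absurd ((hV i 0 2).1 h) (by decide)))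
      · -- j = i + 3
        have hj' : j = i + 3 := by linear_combination hk
        subst hj'
        have hB2 : ∀ c : ZMod 5, G.Adj b (v (i + c)) ↔
            (c - 3 = -1 ∨ c - 3 = 0 ∨ c - 3 = 1 ∨ c - 3 = 2) := fun c => by
          rw [show i + c = (i+3) + (c - 3) by ring]; exact hB _
        exact hHVN (build_hvn G b (v (i+4)) a (v (i+0)) (v (i+3))
          ((hB2 4).2 (by decide)) hab.symm ((hB2 0).2 (by decide))
          ((hA 4).2 (by decide)).symm ((hV i 4 0).2 (by decide))
          ((hA 0).2 (by decide))
          ((hB2 3).2 (by decide)).symm ((hV i 3 4).2 (by decide))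
          (fun h => absurd ((hA 3).1 h.symm) (by decide))
          (fun h => absurd ((hV i 3 0).1 h) (by decide)))
      · -- j = i + 4
        have hj' : j = i + 4 := by linear_combination hk
        subst hj'
        have hB2 : ∀ c : ZMod 5, G.Adj b (v (i + c)) ↔
            (c - 4 = -1 ∨ c - 4 = 0 ∨ c - 4 = 1 ∨ c - 4 = 2) := fun c => by
          rw [show i + c = (i+4) + (c - 4) by ring]; exact hB _
        exact hHVN (build_hvn G a (v (i+1)) b (v (i+0)) (v (i+2))
          ((hA 1).2 (by decide)) hab ((hA 0).2 (by decide))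
          ((hB2 1).2 (by decide)).symm ((hV i 1 0).2 (by decide))
          ((hB2 0).2 (by decide))
          ((hA 2).2 (by decide)).symm ((hV i 2 1).2 (by decide))
          (fun h => absurd ((hB2 2).1 h.symm) (by decide))
          (fun h => absurd ((hV i 2 0).1 h) (by decide)))
end

section
/- Let G be a (P_5, HVN)-free graph containing an induced 5-cycle C = v_1 v_2 v_3 v_4 v_5 v_1, and for each i (mod 5) let Y_i be the set of vertices u with N_C(u) = {v_{i-2}, v_i, v_{i+2}}. Then each Y_i is a stable set. -/
open SimpleGraph

/-- Characterization of adjacency in `hvnGraph`. -/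
lemma hvn_adj_iff_s6 : ∀ x y : Fin 5, hvnGraph.Adj x y ↔
    (x ≠ y ∧ s(x,y) ≠ s(2,4) ∧ s(x,y) ≠ s(3,4)) := by
  simp only [hvnGraph, SimpleGraph.fromEdgeSet_adj, Set.mem_insert_iff,
    Set.mem_singleton_iff]
  decide

/-- Auxiliary: a vertex whose cycle neighbourhood is `{v (i-2), v i, v (i+2)}` is adjacent
to those three cycle vertices and is not itself a cycle vertex. -/
lemma y_adj {V : Type*} (G : SimpleGraph V) (v : ZMod 5 → V)
    (hC : IsInducedC5 G v) (i : ZMod 5) (a : V)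
    (ha : cycNbhd G v a = {v (i - 2), v i, v (i + 2)}) :
    G.Adj a (v (i-2)) ∧ G.Adj a (v i) ∧ G.Adj a (v (i+2)) ∧ ∀ j, a ≠ v j := by
  have h1 : v (i-2) ∈ ({v (i - 2), v i, v (i + 2)} : Set V) := by left; rfl
  have h2 : v i ∈ ({v (i - 2), v i, v (i + 2)} : Set V) := by right; left; rfl
  have h3 : v (i+2) ∈ ({v (i - 2), v i, v (i + 2)} : Set V) := by right; right; rfl
  rw [← ha] at h1 h2 h3
  refine ⟨h1.2, h2.2, h3.2, ?_⟩
  rintro j rfl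
  have key : ∀ p q : ZMod 5, ¬((p-2 = q+1 ∨ p-2 = q-1) ∧ (p = q+1 ∨ p = q-1) ∧
      (p+2 = q+1 ∨ p+2 = q-1)) := by decide
  exact key i j ⟨(hC.2 j _).1 h1.2, (hC.2 j _).1 h2.2, (hC.2 j _).1 h3.2⟩

/-- In a (P₅, HVN)-free graph with an induced 5-cycle, each set `Y i` is stable. -/
theorem y_stable {V : Type*} (G : SimpleGraph V)
    (hP5 : InducedFree G (pathGraph 5)) (hHVN : InducedFree G hvnGraph)
    (v : ZMod 5 → V) (hC : IsInducedC5 G v) :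
    ∀ i : ZMod 5, ∀ a ∈ {u : V | cycNbhd G v u = {v (i - 2), v i, v (i + 2)}},
      ∀ b ∈ {u : V | cycNbhd G v u = {v (i - 2), v i, v (i + 2)}}, ¬ G.Adj a b := by
  intro i a ha b hb hab
  obtain ⟨ha1, ha2, ha3, haV⟩ := y_adj G v hC i a ha
  obtain ⟨hb1, hb2, hb3, hbV⟩ := y_adj G v hC i b hb
  have hadj := hC.2
  have hinj := hC.1
  -- cycle adjacency / non-adjacency facts
  have k1 : ∀ p : ZMod 5, p + 2 = (p - 2) - 1 := by decide
  have e23 : G.Adj (v (i-2)) (v (i+2)) := (hadj _ _).2 (Or.inr (k1 i))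
  have k2 : ∀ p : ZMod 5, ¬(p = p - 2 + 1 ∨ p = p - 2 - 1) := by decide
  have n2i : ¬ G.Adj (v (i-2)) (v i) := by rw [hadj]; exact k2 i
  have ni2 : ¬ G.Adj (v i) (v (i-2)) := fun h => n2i h.symm
  have k3 : ∀ p : ZMod 5, ¬(p = p + 2 + 1 ∨ p = p + 2 - 1) := by decide
  have n3i : ¬ G.Adj (v (i+2)) (v i) := by rw [hadj]; exact k3 i
  have ni3 : ¬ G.Adj (v i) (v (i+2)) := fun h => n3i h.symm
  have hne : a ≠ b := G.ne_of_adj hab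
  have k4 : ∀ p : ZMod 5, p - 2 ≠ p + 2 ∧ p - 2 ≠ p ∧ p + 2 ≠ p := by decide
  have d1 : v (i-2) ≠ v (i+2) := fun h => (k4 i).1 (hinj h)
  have d2 : v (i-2) ≠ v i := fun h => (k4 i).2.1 (hinj h)
  have d3 : v (i+2) ≠ v i := fun h => (k4 i).2.2 (hinj h)
  apply hHVN
  refine ⟨⟨![a, b, v (i-2), v (i+2), v i], ?_⟩, ?_⟩
  · intro x y h
    fin_cases x <;> fin_cases y <;>
      simp only [Matrix.cons_val_zero, Matrix.cons_val_one, Matrix.head_cons,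
        Matrix.cons_val_two, Matrix.tail_cons, Matrix.cons_val_three,
        Matrix.cons_val_four] at h <;>
      first
        | rfl
        | exact absurd h hne
        | exact absurd h.symm hne
        | exact absurd h (haV _)
        | exact absurd h.symm (haV _)
        | exact absurd h (hbV _)
        | exact absurd h.symm (hbV _)
        | exact absurd h d1
        | exact absurd h.symm d1
        | exact absurd h d2
        | exact absurd h.symm d2
        | exact absurd h d3
        | exact absurd h.symm d3
  · intro x y
    fin_cases x <;> fin_cases y <;>
      simp only [Function.Embedding.coeFn_mk, Matrix.cons_val_zero, Matrix.cons_val_one,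
        Matrix.head_cons, Matrix.cons_val_two, Matrix.tail_cons, Matrix.cons_val_three,
        Matrix.cons_val_four] <;> rw [hvn_adj_iff_s6] <;>
      first
        | exact iff_of_true (by decide) (by first
            | exact hab | exact hab.symm | assumption
            | exact ha1.symm | exact ha2.symm | exact ha3.symm
            | exact hb1.symm | exact hb2.symm | exact hb3.symm
            | exact e23.symm)
        | exact iff_of_false (by decide) (by first
            | exact G.irrefl | assumption)
end

section
/- Let G be a (P_5, HVN)-free graph containing an induced 5-cycle C = v_1 v_2 v_3 v_4 v_5 v_1. Let T be the set of vertices complete to C, let \bar{R}_i be the set of vertices u with N_C(u) = {v_{i-1}, v_i, v_{i+1}}, and Y_i the set of vertices with N_C(u) = {v_{i-2}, v_i, v_{i+2}} (indices mod 5). Then T is anticomplete to \bar{R}_i and to Y_i for every i. -/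
open SimpleGraph

lemma hvn_embed {V : Type*} (G : SimpleGraph V) (a : Fin 5 → V)
    (h01 : G.Adj (a 0) (a 1)) (h02 : G.Adj (a 0) (a 2)) (h03 : G.Adj (a 0) (a 3))
    (h12 : G.Adj (a 1) (a 2)) (h13 : G.Adj (a 1) (a 3)) (h23 : G.Adj (a 2) (a 3))
    (h40 : G.Adj (a 4) (a 0)) (h41 : G.Adj (a 4) (a 1))
    (n42 : ¬ G.Adj (a 4) (a 2)) (n43 : ¬ G.Adj (a 4) (a 3))
    (e42 : a 4 ≠ a 2) (e43 : a 4 ≠ a 3) :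
    ContainsInduced G hvnGraph := by
  have inj : Function.Injective a := by
    have N01 := h01.ne; have N02 := h02.ne; have N03 := h03.ne
    have N12 := h12.ne; have N13 := h13.ne; have N23 := h23.ne
    have N40 := h40.ne; have N41 := h41.ne
    intro x y hxy
    fin_cases x <;> fin_cases y <;> simp_all
  refine ⟨⟨a, inj⟩, ?_⟩
  have h10 := h01.symm; have h20 := h02.symm; have h30 := h03.symm
  have h21 := h12.symm; have h31 := h13.symm; have h32 := h23.symm
  have h04 := h40.symm; have h14 := h41.symm
  have n24 : ¬ G.Adj (a 2) (a 4) := fun h => n42 h.symm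
  have n34 : ¬ G.Adj (a 3) (a 4) := fun h => n43 h.symm
  intro x y
  fin_cases x <;> fin_cases y <;>
    simp only [hvnGraph, Function.Embedding.coeFn_mk, fromEdgeSet_adj, Set.mem_insert_iff,
      Set.mem_singleton_iff, Sym2.eq, Sym2.rel_iff', Prod.mk.injEq, Prod.swap_prod_mk] <;>
    simp_all (config := {decide := true})

/-- In a (P₅, HVN)-free graph with an induced 5-cycle, `T` is anticomplete to every
`R̄ i` and every `Y i`. -/
theorem t_anticomplete {V : Type*} (G : SimpleGraph V)
    (hP5 : InducedFree G (pathGraph 5)) (hHVN : InducedFree G hvnGraph)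
    (v : ZMod 5 → V) (hC : IsInducedC5 G v) :
    ∀ t ∈ {u : V | cycNbhd G v u = Set.range v}, ∀ i : ZMod 5,
      ∀ b, (cycNbhd G v b = {v (i - 1), v i, v (i + 1)} ∨
            cycNbhd G v b = {v (i - 2), v i, v (i + 2)}) → ¬ G.Adj t b := by
  obtain ⟨hvInj, hvAdj⟩ := hC
  have hmem : ∀ u j, v j ∈ cycNbhd G v u ↔ G.Adj u (v j) :=
    fun u j => ⟨fun h => h.2, fun h => ⟨⟨j, rfl⟩, h⟩⟩
  intro t ht i b hb hadj
  have ht' : cycNbhd G v t = Set.range v := ht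
  have htadj : ∀ j, G.Adj t (v j) := fun j => by
    have : v j ∈ cycNbhd G v t := by rw [ht']; exact ⟨j, rfl⟩
    exact this.2
  apply hHVN
  rcases hb with hb | hb
  · have hbadj : ∀ j, G.Adj b (v j) ↔ (j = i - 1 ∨ j = i ∨ j = i + 1) := fun j => by
      rw [← hmem, hb]
      simp [hvInj.eq_iff]
    have hbi : G.Adj b (v i) := (hbadj i).mpr (Or.inr (Or.inl rfl))
    have hbne : b ≠ v (i - 2) := by
      intro h
      rw [h] at hbi
      rcases (hvAdj _ _).mp hbi with h' | h' <;>
        · have := congrArg (· - i) h'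
          ring_nf at this
          exact absurd this (by decide)
    refine hvn_embed G ![v (i-1), t, b, v i, v (i-2)] ?_ ?_ ?_ ?_ ?_ ?_ ?_ ?_ ?_ ?_ ?_ ?_ <;>
      simp only [Matrix.cons_val_zero, Matrix.cons_val_one, Matrix.head_cons,
        Matrix.cons_val_two, Matrix.tail_cons, Matrix.cons_val_three, Matrix.cons_val_four]
    · exact (htadj (i-1)).symm
    · exact ((hbadj (i-1)).mpr (Or.inl rfl)).symm
    · exact (hvAdj _ _).mpr (by left; ring)
    · exact hadj
    · exact htadj i
    · exact hbi
    · exact (hvAdj _ _).mpr (by left; ring)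
    · exact (htadj (i-2)).symm
    · intro h
      rcases (hbadj (i-2)).mp h.symm with h' | h' | h' <;>
        · have := congrArg (· - i) h'
          ring_nf at this
          exact absurd this (by decide)
    · intro h
      rcases (hvAdj _ _).mp h with h' | h' <;>
        · have := congrArg (· - i) h'
          ring_nf at this
          exact absurd this (by decide)
    · exact hbne.symm
    · intro h
      have h' := hvInj h
      have := congrArg (· - i) h'
      ring_nf at this
      exact absurd this (by decide)
  · have hbadj : ∀ j, G.Adj b (v j) ↔ (j = i - 2 ∨ j = i ∨ j = i + 2) := fun j => by
      rw [← hmem, hb]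
      simp [hvInj.eq_iff]
    refine hvn_embed G ![t, b, v (i+2), v (i+3), v i] ?_ ?_ ?_ ?_ ?_ ?_ ?_ ?_ ?_ ?_ ?_ ?_ <;>
      simp only [Matrix.cons_val_zero, Matrix.cons_val_one, Matrix.head_cons,
        Matrix.cons_val_two, Matrix.tail_cons, Matrix.cons_val_three, Matrix.cons_val_four]
    · exact hadj
    · exact htadj (i+2)
    · exact htadj (i+3)
    · exact (hbadj (i+2)).mpr (Or.inr (Or.inr rfl))
    · exact (hbadj (i+3)).mpr (Or.inl (by rw [sub_eq_add_neg, show (-2 : ZMod 5) = 3 by decide]))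
    · exact (hvAdj _ _).mpr (by left; ring)
    · exact (htadj i).symm
    · exact ((hbadj i).mpr (Or.inr (Or.inl rfl))).symm
    · intro h
      rcases (hvAdj _ _).mp h with h' | h' <;>
        · have := congrArg (· - i) h'
          ring_nf at this
          exact absurd this (by decide)
    · intro h
      rcases (hvAdj _ _).mp h with h' | h' <;>
        · have := congrArg (· - i) h'
          ring_nf at this
          exact absurd this (by decide)
    · intro h
      have h' := hvInj h
      have := congrArg (· - i) h'
      ring_nf at this
      exact absurd this (by decide)
    · intro h
      have h' := hvInj h
      have := congrArg (· - i) h'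
      ring_nf at this
      exact absurd this (by decide)
end

section
/- Let G be a (P_5, HVN)-free graph containing an induced 5-cycle C = v_1 v_2 v_3 v_4 v_5 v_1, and define R_i = {u : N_C(u) = {v_{i-1}, v_{i+1}}} and \bar{R}_i = {u : N_C(u) = {v_{i-1}, v_i, v_{i+1}}} (indices mod 5). Then R_i ∪ \bar{R}_i is complete to R_{i+1} ∪ \bar{R}_{i+1} for every i. -/
open SimpleGraph

/-- In a (P₅, HVN)-free graph with an induced 5-cycle, `R i ∪ R̄ i` is complete to
`R (i+1) ∪ R̄ (i+1)`. -/
theorem r_complete {V : Type*} (G : SimpleGraph V)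
    (hP5 : InducedFree G (pathGraph 5)) (hHVN : InducedFree G hvnGraph)
    (v : ZMod 5 → V) (hC : IsInducedC5 G v) :
    ∀ i : ZMod 5,
      ∀ a, (cycNbhd G v a = {v (i - 1), v (i + 1)} ∨
            cycNbhd G v a = {v (i - 1), v i, v (i + 1)}) →
      ∀ b, (cycNbhd G v b = {v i, v (i + 2)} ∨
            cycNbhd G v b = {v i, v (i + 1), v (i + 2)}) →
      G.Adj a b := by
  obtain ⟨hv, hadj⟩ := hC
  intro i a ha b hb
  by_contra hab
  have mem : ∀ (u : V) (j : ZMod 5), v j ∈ cycNbhd G v u ↔ G.Adj u (v j) :=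
    fun u j => ⟨fun h => h.2, fun h => ⟨⟨j, rfl⟩, h⟩⟩
  have e4 : i - 1 = i + 4 := by
    have h4 : (-1 : ZMod 5) = 4 := by decide
    rw [sub_eq_add_neg, h4]
  have e0 : v i = v (i + 0) := by rw [add_zero]
  rw [e4] at ha
  rw [e0] at ha hb
  -- index cancellation helper
  have key : ∀ {c d : ZMod 5}, v (i + c) = v (i + d) → c = d :=
    fun h => add_left_cancel (hv h)
  -- adjacency among cycle vertices in shifted form
  have hadj' : ∀ c d : ZMod 5, G.Adj (v (i + c)) (v (i + d)) ↔ (d = c + 1 ∨ d = c - 1) := by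
    intro c d
    rw [hadj]
    constructor
    · rintro (h | h)
      · left; rw [add_assoc] at h; exact add_left_cancel h
      · right; rw [add_sub_assoc] at h; exact add_left_cancel h
    · rintro (rfl | rfl)
      · left; rw [add_assoc]
      · right; rw [add_sub_assoc]
  -- a's adjacencies
  have ha4 : G.Adj a (v (i + 4)) := by
    refine (mem a _).mp ?_
    rcases ha with h | h <;> rw [h] <;> simp
  have ha1 : G.Adj a (v (i + 1)) := by
    refine (mem a _).mp ?_
    rcases ha with h | h <;> rw [h] <;> simp
  have ha2 : ¬ G.Adj a (v (i + 2)) := by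
    intro h'
    have hm := (mem a _).mpr h'
    rcases ha with h | h <;> rw [h] at hm <;>
      simp only [Set.mem_insert_iff, Set.mem_singleton_iff] at hm <;>
      (try rcases hm with hm | hm) <;> (try rcases hm with hm | hm) <;>
      exact absurd (key hm) (by decide)
  have ha3 : ¬ G.Adj a (v (i + 3)) := by
    intro h'
    have hm := (mem a _).mpr h'
    rcases ha with h | h <;> rw [h] at hm <;>
      simp only [Set.mem_insert_iff, Set.mem_singleton_iff] at hm <;>
      (try rcases hm with hm | hm) <;> (try rcases hm with hm | hm) <;>
      exact absurd (key hm) (by decide)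
  -- b's adjacencies
  have hb0 : G.Adj b (v (i + 0)) := by
    refine (mem b _).mp ?_
    rcases hb with h | h <;> rw [h] <;> simp
  have hb2 : G.Adj b (v (i + 2)) := by
    refine (mem b _).mp ?_
    rcases hb with h | h <;> rw [h] <;> simp
  have hb4 : ¬ G.Adj b (v (i + 4)) := by
    intro h'
    have hm := (mem b _).mpr h'
    rcases hb with h | h <;> rw [h] at hm <;>
      simp only [Set.mem_insert_iff, Set.mem_singleton_iff] at hm <;>
      (try rcases hm with hm | hm) <;> (try rcases hm with hm | hm) <;>
      exact absurd (key hm) (by decide)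
  have hb3 : ¬ G.Adj b (v (i + 3)) := by
    intro h'
    have hm := (mem b _).mpr h'
    rcases hb with h | h <;> rw [h] at hm <;>
      simp only [Set.mem_insert_iff, Set.mem_singleton_iff] at hm <;>
      (try rcases hm with hm | hm) <;> (try rcases hm with hm | hm) <;>
      exact absurd (key hm) (by decide)
  -- distinctness
  have n_b2 : b ≠ v (i + 2) := by
    intro h; rw [h] at hb2; exact G.irrefl hb2
  have n_b3 : b ≠ v (i + 3) := by
    intro h; rw [h] at hb0; exact absurd ((hadj' 3 0).mp hb0) (by decide)
  have n_b4 : b ≠ v (i + 4) := by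
    intro h; rw [h] at hb2; exact absurd ((hadj' 4 2).mp hb2) (by decide)
  have n_ba : b ≠ a := by
    intro h; rw [h] at hb2; exact ha2 hb2
  have n_a2 : a ≠ v (i + 2) := by
    intro h; rw [h] at ha4; exact absurd ((hadj' 2 4).mp ha4) (by decide)
  have n_a3 : a ≠ v (i + 3) := by
    intro h; rw [h] at ha1; exact absurd ((hadj' 3 1).mp ha1) (by decide)
  have n_a4 : a ≠ v (i + 4) := by
    intro h; rw [h] at ha4; exact G.irrefl ha4
  have n_23 : v (i + 2) ≠ v (i + 3) := fun h => absurd (key h) (by decide)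
  have n_24 : v (i + 2) ≠ v (i + 4) := fun h => absurd (key h) (by decide)
  have n_34 : v (i + 3) ≠ v (i + 4) := fun h => absurd (key h) (by decide)
  -- the induced P5
  set f : Fin 5 → V := ![b, v (i + 2), v (i + 3), v (i + 4), a] with hf
  have hinj : Function.Injective f := by
    intro x y hxy
    fin_cases x <;> fin_cases y <;>
      simp only [hf, Matrix.cons_val_zero, Matrix.cons_val_one, Matrix.head_cons,
        Matrix.cons_val_two, Matrix.tail_cons, Matrix.cons_val_three,
        Matrix.cons_val_four, Fin.mk_zero, Fin.mk_one, Matrix.cons_val',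
        Matrix.cons_val_fin_one, Matrix.empty_val'] at hxy ⊢ <;>
      first
        | rfl
        | exact absurd hxy (by assumption)
        | exact absurd hxy.symm (by assumption)
  apply hP5
  refine ⟨⟨f, hinj⟩, ?_⟩
  have w23 : G.Adj (v (i + 2)) (v (i + 3)) := (hadj' 2 3).mpr (by decide)
  have w34 : G.Adj (v (i + 3)) (v (i + 4)) := (hadj' 3 4).mpr (by decide)
  have w24 : ¬ G.Adj (v (i + 2)) (v (i + 4)) := fun h => absurd ((hadj' 2 4).mp h) (by decide)
  intro x y
  fin_cases x <;> fin_cases y <;>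
    simp only [hf, Matrix.cons_val_zero, Matrix.cons_val_one, Matrix.head_cons,
      Matrix.cons_val_two, Matrix.tail_cons, Matrix.cons_val_three,
      Matrix.cons_val_four, Matrix.cons_val', Matrix.cons_val_fin_one,
      Matrix.empty_val', pathGraph_adj] <;>
    (try simp only [Fin.isValue]) <;>
    (try norm_num) <;>
    first
      | exact hb2
      | exact w23
      | exact w34
      | exact hb2.symm
      | exact w23.symm
      | exact w34.symm
      | exact ha4.symm
      | exact ha4
      | exact G.irrefl
      | exact hab
      | exact hb3
      | exact hb4
      | exact w24
      | exact ha2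
      | exact ha3
      | exact fun h => hab h.symm
      | exact fun h => hb3 h.symm
      | exact fun h => hb4 h.symm
      | exact fun h => w24 h.symm
      | exact fun h => ha2 h.symm
      | exact fun h => ha3 h.symm
      | exact fun h => n_ba h.symm rfl
      | exact G.loopless _
      | skip
end

section
/- Let G be a (P_5, HVN)-free graph containing an induced 5-cycle C = v_1 v_2 v_3 v_4 v_5 v_1, and define \bar{R}_i = {u : N_C(u) = {v_{i-1}, v_i, v_{i+1}}} (indices mod 5). Then for each i, at least one of \bar{R}_i and \bar{R}_{i+1} is empty. -/
open SimpleGraph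

lemma cyc_adj_iff {V : Type*} (G : SimpleGraph V) (v : ZMod 5 → V)
    (hinj : Function.Injective v) (u : V) (a b c : ZMod 5)
    (h : cycNbhd G v u = {v a, v b, v c}) :
    ∀ j, G.Adj u (v j) ↔ (j = a ∨ j = b ∨ j = c) := by
  intro j
  constructor
  · intro hadj
    have hm : v j ∈ cycNbhd G v u := ⟨⟨j, rfl⟩, hadj⟩
    rw [h] at hm
    rcases hm with h' | h' | h'
    · exact Or.inl (hinj h')
    · exact Or.inr (Or.inl (hinj h'))
    · exact Or.inr (Or.inr (hinj h'))
  · intro hj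
    have hm : v j ∈ ({v a, v b, v c} : Set V) := by
      rcases hj with rfl | rfl | rfl <;> simp
    rw [← h] at hm
    exact hm.2

lemma inj5 {V : Type*} (a b c d e : V) (hab : a ≠ b) (hac : a ≠ c) (had : a ≠ d)
    (hae : a ≠ e) (hbc : b ≠ c) (hbd : b ≠ d) (hbe : b ≠ e) (hcd : c ≠ d)
    (hce : c ≠ e) (hde : d ≠ e) : Function.Injective ![a,b,c,d,e] := by
  intro x y hxy
  fin_cases x <;> fin_cases y <;> simp_all

-- ZMod 5 arithmetic facts
lemma zm1 : ∀ i j : ZMod 5, ¬((i-1=j+1 ∨ i-1=j-1) ∧ (i=j+1 ∨ i=j-1) ∧ (i+1=j+1 ∨ i+1=j-1)) := by decide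
lemma zm2 : ∀ i j : ZMod 5, ¬((i=j+1 ∨ i=j-1) ∧ (i+1=j+1 ∨ i+1=j-1) ∧ (i+2=j+1 ∨ i+2=j-1)) := by decide
lemma zm3 : ∀ i : ZMod 5, ¬(i+2 = i-1 ∨ i+2 = i ∨ i+2 = i+1) := by decide
lemma zm4 : ∀ i : ZMod 5, ¬(i-2 = i-1 ∨ i-2 = i ∨ i-2 = i+1) := by decide
lemma zm5 : ∀ i : ZMod 5, ¬(i-1 = i ∨ i-1 = i+1 ∨ i-1 = i+2) := by decide
lemma zm6 : ∀ i : ZMod 5, ¬(i-2 = i ∨ i-2 = i+1 ∨ i-2 = i+2) := by decide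
lemma zm7 : ∀ i : ZMod 5, ¬(i+2 = i+1 ∨ i+2 = i-1) := by decide
lemma zm8 : ∀ i : ZMod 5, ¬(i+1 = i-2+1 ∨ i+1 = i-2-1) := by decide
lemma zm9 : ∀ i : ZMod 5, ¬(i+1 = i-1+1 ∨ i+1 = i-1-1) := by decide
lemma zne1 : ∀ i : ZMod 5, i+1 ≠ i := by decide
lemma zne2 : ∀ i : ZMod 5, i+1 ≠ i+2 := by decide
lemma zne3 : ∀ i : ZMod 5, i ≠ i+2 := by decide
lemma zne4 : ∀ i : ZMod 5, i-2 ≠ i-1 := by decide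
lemma zne5 : ∀ i : ZMod 5, i-2 ≠ i+1 := by decide
lemma zne6 : ∀ i : ZMod 5, i-1 ≠ i+1 := by decide

set_option maxHeartbeats 2000000 in
/-- In a (P₅, HVN)-free graph with an induced 5-cycle, for each `i` at least one of
`R̄ i` and `R̄ (i+1)` is empty. -/
theorem rbar_empty {V : Type*} (G : SimpleGraph V)
    (hP5 : InducedFree G (pathGraph 5)) (hHVN : InducedFree G hvnGraph)
    (v : ZMod 5 → V) (hC : IsInducedC5 G v) :
    ∀ i : ZMod 5,
      {u : V | cycNbhd G v u = {v (i - 1), v i, v (i + 1)}} = ∅ ∨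
      {u : V | cycNbhd G v u = {v i, v (i + 1), v (i + 2)}} = ∅ := by
  obtain ⟨hinj, hcyc⟩ := hC
  intro i
  by_contra hcon
  push_neg at hcon
  obtain ⟨h1, h2⟩ := hcon
  obtain ⟨u, hu⟩ := h1
  obtain ⟨w, hw⟩ := h2
  have huadj : ∀ j, G.Adj u (v j) ↔ (j = i - 1 ∨ j = i ∨ j = i + 1) :=
    cyc_adj_iff G v hinj u _ _ _ hu
  have hwadj : ∀ j, G.Adj w (v j) ↔ (j = i ∨ j = i + 1 ∨ j = i + 2) :=
    cyc_adj_iff G v hinj w _ _ _ hw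
  have hune : ∀ j, u ≠ v j := by
    intro j hj
    have a1 : G.Adj (v j) (v (i-1)) := by rw [← hj]; exact (huadj _).mpr (Or.inl rfl)
    have a2 : G.Adj (v j) (v i) := by rw [← hj]; exact (huadj _).mpr (Or.inr (Or.inl rfl))
    have a3 : G.Adj (v j) (v (i+1)) := by rw [← hj]; exact (huadj _).mpr (Or.inr (Or.inr rfl))
    exact zm1 i j ⟨(hcyc _ _).mp a1, (hcyc _ _).mp a2, (hcyc _ _).mp a3⟩
  have hwne : ∀ j, w ≠ v j := by
    intro j hj
    have a1 : G.Adj (v j) (v i) := by rw [← hj]; exact (hwadj _).mpr (Or.inl rfl)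
    have a2 : G.Adj (v j) (v (i+1)) := by rw [← hj]; exact (hwadj _).mpr (Or.inr (Or.inl rfl))
    have a3 : G.Adj (v j) (v (i+2)) := by rw [← hj]; exact (hwadj _).mpr (Or.inr (Or.inr rfl))
    exact zm2 i j ⟨(hcyc _ _).mp a1, (hcyc _ _).mp a2, (hcyc _ _).mp a3⟩
  have huw : u ≠ w := by
    intro h
    have ha : G.Adj u (v (i+2)) := by rw [h]; exact (hwadj _).mpr (Or.inr (Or.inr rfl))
    exact zm3 i ((huadj _).mp ha)
  have hvne : ∀ j k : ZMod 5, j ≠ k → v j ≠ v k := fun j k h hh => h (hinj hh)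
  -- adjacency facts
  have A1 : G.Adj u (v (i-1)) := (huadj _).mpr (Or.inl rfl)
  have A2 : G.Adj u (v i) := (huadj _).mpr (Or.inr (Or.inl rfl))
  have A3 : G.Adj u (v (i+1)) := (huadj _).mpr (Or.inr (Or.inr rfl))
  have N1 : ¬ G.Adj u (v (i+2)) := fun h => zm3 i ((huadj _).mp h)
  have N2 : ¬ G.Adj u (v (i-2)) := fun h => zm4 i ((huadj _).mp h)
  have B1 : G.Adj w (v i) := (hwadj _).mpr (Or.inl rfl)
  have B2 : G.Adj w (v (i+1)) := (hwadj _).mpr (Or.inr (Or.inl rfl))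
  have B3 : G.Adj w (v (i+2)) := (hwadj _).mpr (Or.inr (Or.inr rfl))
  have M1 : ¬ G.Adj w (v (i-1)) := fun h => zm5 i ((hwadj _).mp h)
  have M2 : ¬ G.Adj w (v (i-2)) := fun h => zm6 i ((hwadj _).mp h)
  have C1 : G.Adj (v i) (v (i+1)) := (hcyc _ _).mpr (Or.inl rfl)
  have C2 : G.Adj (v (i-2)) (v (i-1)) := (hcyc _ _).mpr (Or.inl (by ring))
  have C3 : G.Adj (v (i+1)) (v (i+2)) := (hcyc _ _).mpr (Or.inl (by ring))
  have D1 : ¬ G.Adj (v i) (v (i+2)) := fun h => zm7 i ((hcyc _ _).mp h)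
  have D2 : ¬ G.Adj (v (i-2)) (v (i+1)) := fun h => zm8 i ((hcyc _ _).mp h)
  have D3 : ¬ G.Adj (v (i-1)) (v (i+1)) := fun h => zm9 i ((hcyc _ _).mp h)
  by_cases huwadj : G.Adj u w
  · -- HVN on v(i+1), w, v i, u, v(i+2)
    apply hHVN
    refine ⟨⟨![v (i+1), w, v i, u, v (i+2)], inj5 _ _ _ _ _ (Ne.symm (hwne _))
      (hvne _ _ (zne1 i)) (Ne.symm (hune _)) (hvne _ _ (zne2 i)) (hwne _) huw.symm
      (hwne _) (Ne.symm (hune _)) (hvne _ _ (zne3 i)) (hune _)⟩, ?_⟩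
    intro a b
    fin_cases a <;> fin_cases b <;>
      simp only [Function.Embedding.coeFn_mk] <;>
      simp (config := { decide := true }) [hvnGraph] <;>
      first
        | exact A2 | exact A2.symm | exact A3 | exact A3.symm
        | exact B1 | exact B1.symm | exact B2 | exact B2.symm | exact B3 | exact B3.symm
        | exact C1 | exact C1.symm | exact C3 | exact C3.symm
        | exact huwadj | exact huwadj.symm | exact G.irrefl
        | exact N1 | exact fun h => N1 h.symm
        | exact D1 | exact fun h => D1 h.symm
  · -- P5 on v(i-2), v(i-1), u, v(i+1), w
    apply hP5
    refine ⟨⟨![v (i-2), v (i-1), u, v (i+1), w], inj5 _ _ _ _ _ (hvne _ _ (zne4 i))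
      (Ne.symm (hune _)) (hvne _ _ (zne5 i)) (Ne.symm (hwne _)) (Ne.symm (hune _))
      (hvne _ _ (zne6 i)) (Ne.symm (hwne _)) (hune _) huw (Ne.symm (hwne _))⟩, ?_⟩
    intro a b
    fin_cases a <;> fin_cases b <;>
      simp only [Function.Embedding.coeFn_mk] <;>
      simp (config := { decide := true }) [pathGraph_adj] <;>
      first
        | exact A1 | exact A1.symm | exact A3 | exact A3.symm
        | exact B2 | exact B2.symm
        | exact C2 | exact C2.symm
        | exact N2 | exact fun h => N2 h.symm
        | exact M1 | exact fun h => M1 h.symm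
        | exact M2 | exact fun h => M2 h.symm
        | exact D2 | exact fun h => D2 h.symm
        | exact D3 | exact fun h => D3 h.symm
        | exact huwadj | exact fun h => huwadj h.symm | exact G.irrefl
end

section
/- Let G be a P_5-free graph containing an induced 5-cycle C = v_1 v_2 v_3 v_4 v_5 v_1. Let S be the set of vertices with no neighbour on C, and R_i = {u : N_C(u) = {v_{i-1}, v_{i+1}}}, \bar{R}_i = {u : N_C(u) = {v_{i-1}, v_i, v_{i+1}}} (indices mod 5). Then S is anticomplete to R_i ∪ \bar{R}_i for every i. -/
/-! A vertex `b` of `R i ∪ R̄ i` sees `v (i + 1)` but neither `v (i + 2)` nor `v (i + 3)`.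
So if `s` had no neighbour on the cycle but were adjacent to `b`, then
`s - b - v (i + 1) - v (i + 2) - v (i + 3)` would be an induced `P₅`. -/

open SimpleGraph

theorem injective_of_forall_adj_iff {V W : Type*} {G : SimpleGraph V} {H : SimpleGraph W}
    (hH : ∀ a b, ¬ H.Adj a b → (∀ c, H.Adj a c ↔ H.Adj b c) → a = b)
    {f : W → V} (hf : ∀ a b, H.Adj a b ↔ G.Adj (f a) (f b)) : Function.Injective f := by
  intro a b hab
  refine hH a b (fun h => ?_) fun c => by rw [hf, hf, hab]
  have hfab := (hf a b).1 h
  rw [hab] at hfab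
  exact G.irrefl hfab

theorem pathGraph_five_eq_of_not_adj_of_forall_adj_iff (a b : Fin 5)
    (hab : ¬ (pathGraph 5).Adj a b) (h : ∀ c, (pathGraph 5).Adj a c ↔ (pathGraph 5).Adj b c) :
    a = b := by
  revert a b
  simp only [pathGraph_adj]
  decide

theorem containsInduced_pathGraph_five {V : Type*} {G : SimpleGraph V} {a₀ a₁ a₂ a₃ a₄ : V}
    (h₀₁ : G.Adj a₀ a₁) (h₁₂ : G.Adj a₁ a₂) (h₂₃ : G.Adj a₂ a₃) (h₃₄ : G.Adj a₃ a₄)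
    (h₀₂ : ¬ G.Adj a₀ a₂) (h₀₃ : ¬ G.Adj a₀ a₃) (h₀₄ : ¬ G.Adj a₀ a₄)
    (h₁₃ : ¬ G.Adj a₁ a₃) (h₁₄ : ¬ G.Adj a₁ a₄) (h₂₄ : ¬ G.Adj a₂ a₄) :
    ContainsInduced G (pathGraph 5) := by
  have hf : ∀ a b, (pathGraph 5).Adj a b ↔
      G.Adj (![a₀, a₁, a₂, a₃, a₄] a) (![a₀, a₁, a₂, a₃, a₄] b) := by
    intro a b
    fin_cases a <;> fin_cases b <;> simp [pathGraph_adj, G.adj_comm, *]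
  exact ⟨⟨_, injective_of_forall_adj_iff pathGraph_five_eq_of_not_adj_of_forall_adj_iff hf⟩, hf⟩

section cycNbhd

variable {V : Type*} {G : SimpleGraph V} {v : ZMod 5 → V} {u : V}

theorem mem_cycNbhd_iff {k : ZMod 5} : v k ∈ cycNbhd G v u ↔ G.Adj u (v k) :=
  ⟨And.right, fun h => ⟨⟨k, rfl⟩, h⟩⟩

theorem not_adj_of_cycNbhd_eq_empty (h : cycNbhd G v u = ∅) (k : ZMod 5) : ¬ G.Adj u (v k) :=
  fun hk => Set.notMem_empty _ (h ▸ mem_cycNbhd_iff.2 hk)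

namespace IsInducedC5

theorem add_adj_add_iff (hC : IsInducedC5 G v) (i a c : ZMod 5) :
    G.Adj (v (i + a)) (v (i + c)) ↔ c = a + 1 ∨ c = a - 1 := by
  rw [hC.2, add_assoc, add_sub_assoc, add_right_inj, add_right_inj]

theorem eq_of_adj_of_cycNbhd_subset (hC : IsInducedC5 G v) {i d : ZMod 5}
    (h : cycNbhd G v u ⊆ {v (i - 1), v i, v (i + 1)}) (hd : G.Adj u (v (i + d))) :
    d = -1 ∨ d = 0 ∨ d = 1 := by
  have := h (mem_cycNbhd_iff.2 hd)
  simpa [hC.1.eq_iff, sub_eq_add_neg] using this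

end IsInducedC5

end cycNbhd

/-- In a P₅-free graph with an induced 5-cycle, the set `S` of vertices with no neighbour
on the cycle is anticomplete to every `R i ∪ R̄ i`. -/
theorem s_anticomplete_r {V : Type*} (G : SimpleGraph V)
    (hP5 : InducedFree G (pathGraph 5)) (v : ZMod 5 → V) (hC : IsInducedC5 G v) :
    ∀ s ∈ {u : V | cycNbhd G v u = (∅ : Set V)}, ∀ i : ZMod 5,
      ∀ b, (cycNbhd G v b = {v (i - 1), v (i + 1)} ∨
            cycNbhd G v b = {v (i - 1), v i, v (i + 1)}) → ¬ G.Adj s b := by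
  rintro s hs i b hb hsb
  have hb_sub : cycNbhd G v b ⊆ {v (i - 1), v i, v (i + 1)} := by
    rcases hb with hb | hb
    · exact hb ▸ Set.insert_subset_insert (Set.subset_insert _ _)
    · exact hb.subset
  have hb_near (d : ZMod 5) : G.Adj b (v (i + d)) → d = -1 ∨ d = 0 ∨ d = 1 :=
    hC.eq_of_adj_of_cycNbhd_subset hb_sub
  have hb₁ : G.Adj b (v (i + 1)) := mem_cycNbhd_iff.1 (by rcases hb with hb | hb <;> simp [hb])
  have hs_far := not_adj_of_cycNbhd_eq_empty hs
  have hcyc := hC.add_adj_add_iff i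
  exact hP5 <| containsInduced_pathGraph_five hsb hb₁ ((hcyc 1 2).2 (by decide))
    ((hcyc 2 3).2 (by decide)) (hs_far _) (hs_far _) (hs_far _)
    (fun h => absurd (hb_near 2 h) (by decide)) (fun h => absurd (hb_near 3 h) (by decide))
    (fun h => absurd ((hcyc 1 3).1 h) (by decide))
end

section
/- Let G be a (P_5, HVN)-free graph with no induced T-5-wheel and no induced Y-5-wheel, containing an induced 5-cycle C = v_1...v_5. Define R_i = {u : N_C(u) = {v_{i-1}, v_{i+1}}} (indices mod 5). Then each R_i is a stable set, and moreover if R_{i-1} and R_{i+1} are both nonempty then R_{i-1} is anticomplete to R_{i+1}. -/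
open SimpleGraph

set_option maxHeartbeats 2000000

/-- Adjacency characterisation for a vertex whose cycle neighbourhood is `{v (k-1), v (k+1)}`. -/
lemma R_adj_iff {V : Type*} {G : SimpleGraph V} {v : ZMod 5 → V}
    (hC : IsInducedC5 G v) {u : V} {k : ZMod 5}
    (hu : cycNbhd G v u = {v (k - 1), v (k + 1)}) (j : ZMod 5) :
    G.Adj u (v j) ↔ (j = k - 1 ∨ j = k + 1) := by
  constructor
  · intro h
    have hm : v j ∈ cycNbhd G v u := ⟨⟨j, rfl⟩, h⟩
    rw [hu] at hm
    simp only [Set.mem_insert_iff, Set.mem_singleton_iff] at hm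
    rcases hm with hm | hm
    · exact Or.inl (hC.1 hm)
    · exact Or.inr (hC.1 hm)
  · rintro (rfl | rfl)
    · have hm : v (k - 1) ∈ cycNbhd G v u := by rw [hu]; exact Set.mem_insert _ _
      exact hm.2
    · have hm : v (k + 1) ∈ cycNbhd G v u := by
        rw [hu]; exact Set.mem_insert_of_mem _ rfl
      exact hm.2

lemma shift_iff {V : Type*} {G : SimpleGraph V} {v : ZMod 5 → V} (i : ZMod 5)
    (u : V) (k c : ZMod 5) (hk : k = i + c)
    (h : ∀ j, G.Adj u (v j) ↔ (j = k - 1 ∨ j = k + 1)) (e : ZMod 5) :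
    G.Adj u (v (i + e)) ↔ (e = c - 1 ∨ e = c + 1) := by
  rw [h]
  constructor
  · rintro (h' | h')
    · exact Or.inl (by linear_combination h' + hk)
    · exact Or.inr (by linear_combination h' + hk)
  · rintro (h' | h')
    · exact Or.inl (by linear_combination h' - hk)
    · exact Or.inr (by linear_combination h' - hk)

/-- In a (P₅, HVN, T-5-wheel, Y-5-wheel)-free graph with an induced 5-cycle, each `R i`
is stable, and if `R (i-1)` and `R (i+1)` are both nonempty then they are anticomplete. -/
theorem r_stable_and_anticomplete {V : Type*} (G : SimpleGraph V)
    (hP5 : InducedFree G (pathGraph 5)) (hHVN : InducedFree G hvnGraph)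
    (hT5 : InducedFree G t5WheelGraph) (hY5 : InducedFree G y5WheelGraph)
    (v : ZMod 5 → V) (hC : IsInducedC5 G v)
    (R : ZMod 5 → Set V)
    (hR : ∀ i, R i = {u : V | cycNbhd G v u = {v (i - 1), v (i + 1)}}) :
    (∀ i : ZMod 5, ∀ a ∈ R i, ∀ b ∈ R i, ¬ G.Adj a b) ∧
    (∀ i : ZMod 5, (R (i - 1)).Nonempty → (R (i + 1)).Nonempty →
      ∀ a ∈ R (i - 1), ∀ b ∈ R (i + 1), ¬ G.Adj a b) := by
  have hADJ : ∀ i d e : ZMod 5, G.Adj (v (i + d)) (v (i + e)) ↔ (e = d - 1 ∨ e = d + 1) :=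
    fun i d => shift_iff i (v (i + d)) (i + d) d rfl
      (fun j => (hC.2 (i + d) j).trans or_comm)
  constructor
  · -- R i is stable
    intro i a ha b hb hab
    rw [hR i, Set.mem_setOf_eq] at ha hb
    have hA : ∀ e : ZMod 5, G.Adj a (v (i + e)) ↔ (e = 0 - 1 ∨ e = 0 + 1) :=
      shift_iff i a i 0 (by ring) (R_adj_iff hC ha)
    have hB : ∀ e : ZMod 5, G.Adj b (v (i + e)) ↔ (e = 0 - 1 ∨ e = 0 + 1) :=
      shift_iff i b i 0 (by ring) (R_adj_iff hC hb)
    -- a and b are not on the cycle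
    have hano : ∀ e : ZMod 5, a ≠ v (i + e) := by
      intro e he
      have t1 : (0 - 1 : ZMod 5) = e - 1 ∨ (0 - 1 : ZMod 5) = e + 1 :=
        (hADJ i e (0 - 1)).1 (he ▸ (hA (0 - 1)).2 (Or.inl rfl))
      have t2 : (0 + 1 : ZMod 5) = e - 1 ∨ (0 + 1 : ZMod 5) = e + 1 :=
        (hADJ i e (0 + 1)).1 (he ▸ (hA (0 + 1)).2 (Or.inr rfl))
      have t3 : e = 0 - 1 ∨ e = 0 + 1 := (hB e).1 (he ▸ hab.symm)
      revert t1 t2 t3; clear he; revert e; decide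
    have hbno : ∀ e : ZMod 5, b ≠ v (i + e) := by
      intro e he
      have t1 : (0 - 1 : ZMod 5) = e - 1 ∨ (0 - 1 : ZMod 5) = e + 1 :=
        (hADJ i e (0 - 1)).1 (he ▸ (hB (0 - 1)).2 (Or.inl rfl))
      have t2 : (0 + 1 : ZMod 5) = e - 1 ∨ (0 + 1 : ZMod 5) = e + 1 :=
        (hADJ i e (0 + 1)).1 (he ▸ (hB (0 + 1)).2 (Or.inr rfl))
      have t3 : e = 0 - 1 ∨ e = 0 + 1 := (hA e).1 (he ▸ hab)
      revert t1 t2 t3; clear he; revert e; decide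
    have hvne : ∀ d e : ZMod 5, d ≠ e → v (i + d) ≠ v (i + e) :=
      fun d e h he => h (by have := hC.1 he; linear_combination this)
    -- embed the T-5-wheel
    set g : Fin 6 → V := ![a, v (i + 1), v (i + 2), v (i + 3), v (i + 4), b] with hg
    have ginj : Function.Injective g := by
      intro x y hxy
      fin_cases x <;> fin_cases y <;>
        simp only [hg, Matrix.cons_val_zero, Matrix.cons_val_one, Matrix.head_cons,
          Matrix.cons_val_succ, Fin.mk_zero, Fin.mk_one] at hxy <;>
        first
        | rfl
        | exact absurd hxy (hano _)
        | exact absurd hxy.symm (hano _)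
        | exact absurd hxy (hbno _)
        | exact absurd hxy.symm (hbno _)
        | exact absurd hxy (hvne _ _ (by decide))
        | exact absurd hxy (G.ne_of_adj hab)
        | exact absurd hxy.symm (G.ne_of_adj hab)
    apply hT5
    refine ⟨⟨g, ginj⟩, ?_⟩
    intro x y
    have e1 : G.Adj a (v (i + 1)) := (hA 1).2 (Or.inr rfl)
    have e2 : G.Adj a (v (i + 4)) := (hA 4).2 (Or.inl rfl)
    have e3 : G.Adj b (v (i + 1)) := (hB 1).2 (Or.inr rfl)
    have e4 : G.Adj b (v (i + 4)) := (hB 4).2 (Or.inl rfl)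
    have n1 : ¬ G.Adj a (v (i + 2)) := fun h => by
      have := (hA 2).1 h; revert this; decide
    have n2 : ¬ G.Adj a (v (i + 3)) := fun h => by
      have := (hA 3).1 h; revert this; decide
    have n3 : ¬ G.Adj b (v (i + 2)) := fun h => by
      have := (hB 2).1 h; revert this; decide
    have n4 : ¬ G.Adj b (v (i + 3)) := fun h => by
      have := (hB 3).1 h; revert this; decide
    have c12 : G.Adj (v (i + 1)) (v (i + 2)) := (hADJ i 1 2).2 (Or.inr rfl)
    have c23 : G.Adj (v (i + 2)) (v (i + 3)) := (hADJ i 2 3).2 (Or.inr rfl)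
    have c34 : G.Adj (v (i + 3)) (v (i + 4)) := (hADJ i 3 4).2 (Or.inr rfl)
    have nc13 : ¬ G.Adj (v (i + 1)) (v (i + 3)) := fun h => by
      have := (hADJ i 1 3).1 h; revert this; decide
    have nc14 : ¬ G.Adj (v (i + 1)) (v (i + 4)) := fun h => by
      have := (hADJ i 1 4).1 h; revert this; decide
    have nc24 : ¬ G.Adj (v (i + 2)) (v (i + 4)) := fun h => by
      have := (hADJ i 2 4).1 h; revert this; decide
    fin_cases x <;> fin_cases y <;>
      simp [t5WheelGraph, hg] <;>
      first
      | exact hab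
      | exact hab.symm
      | assumption
      | exact e1.symm
      | exact e2.symm
      | exact e3.symm
      | exact e4.symm
      | exact c12.symm
      | exact c23.symm
      | exact c34.symm
      | exact fun h => n1 h.symm
      | exact fun h => n2 h.symm
      | exact fun h => n3 h.symm
      | exact fun h => n4 h.symm
      | exact fun h => nc13 h.symm
      | exact fun h => nc14 h.symm
      | exact fun h => nc24 h.symm
  · -- anticomplete
    intro i _ _ a ha b hb hab
    rw [hR (i - 1), Set.mem_setOf_eq] at ha
    rw [hR (i + 1), Set.mem_setOf_eq] at hb
    have hA : ∀ e : ZMod 5, G.Adj a (v (i + e)) ↔ (e = (-1 : ZMod 5) - 1 ∨ e = (-1 : ZMod 5) + 1) :=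
      shift_iff i a (i - 1) (-1) (by ring) (R_adj_iff hC ha)
    have hB : ∀ e : ZMod 5, G.Adj b (v (i + e)) ↔ (e = (1 : ZMod 5) - 1 ∨ e = (1 : ZMod 5) + 1) :=
      shift_iff i b (i + 1) 1 rfl (R_adj_iff hC hb)
    have hano : ∀ e : ZMod 5, a ≠ v (i + e) := by
      intro e he
      have t1 : ((-1 : ZMod 5) - 1) = e - 1 ∨ ((-1 : ZMod 5) - 1) = e + 1 :=
        (hADJ i e _).1 (he ▸ (hA ((-1 : ZMod 5) - 1)).2 (Or.inl rfl))
      have t2 : ((-1 : ZMod 5) + 1) = e - 1 ∨ ((-1 : ZMod 5) + 1) = e + 1 :=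
        (hADJ i e _).1 (he ▸ (hA ((-1 : ZMod 5) + 1)).2 (Or.inr rfl))
      have t3 : e = (1 : ZMod 5) - 1 ∨ e = (1 : ZMod 5) + 1 := (hB e).1 (he ▸ hab.symm)
      revert t1 t2 t3; clear he; revert e; decide
    have hbno : ∀ e : ZMod 5, b ≠ v (i + e) := by
      intro e he
      have t1 : ((1 : ZMod 5) - 1) = e - 1 ∨ ((1 : ZMod 5) - 1) = e + 1 :=
        (hADJ i e _).1 (he ▸ (hB ((1 : ZMod 5) - 1)).2 (Or.inl rfl))
      have t2 : ((1 : ZMod 5) + 1) = e - 1 ∨ ((1 : ZMod 5) + 1) = e + 1 :=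
        (hADJ i e _).1 (he ▸ (hB ((1 : ZMod 5) + 1)).2 (Or.inr rfl))
      have t3 : e = (-1 : ZMod 5) - 1 ∨ e = (-1 : ZMod 5) + 1 := (hA e).1 (he ▸ hab)
      revert t1 t2 t3; clear he; revert e; decide
    have hvne : ∀ d e : ZMod 5, d ≠ e → v (i + d) ≠ v (i + e) :=
      fun d e h he => h (by have := hC.1 he; linear_combination this)
    -- embed the Y-5-wheel:  0 ↦ v i, 1 ↦ b, 2 ↦ v(i+2), 3 ↦ v(i+3), 4 ↦ v(i+4), 5 ↦ a
    have hano0 : a ≠ v i := by simpa using hano 0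
    have hbno0 : b ≠ v i := by simpa using hbno 0
    have hvne0 : ∀ e : ZMod 5, e ≠ 0 → v i ≠ v (i + e) := fun e h => by
      have := hvne 0 e (Ne.symm h); simpa using this
    set g : Fin 6 → V := ![v i, b, v (i + 2), v (i + 3), v (i + 4), a] with hg
    have ginj : Function.Injective g := by
      intro x y hxy
      fin_cases x <;> fin_cases y <;>
        simp only [hg, Matrix.cons_val_zero, Matrix.cons_val_one, Matrix.head_cons,
          Matrix.cons_val_succ, Fin.mk_zero, Fin.mk_one] at hxy <;>
        first
        | rfl
        | exact absurd hxy (hano _)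
        | exact absurd hxy.symm (hano _)
        | exact absurd hxy (hbno _)
        | exact absurd hxy.symm (hbno _)
        | exact absurd hxy (hvne _ _ (by decide))
        | exact absurd hxy hano0
        | exact absurd hxy.symm hano0
        | exact absurd hxy hbno0
        | exact absurd hxy.symm hbno0
        | exact absurd hxy (hvne0 _ (by decide))
        | exact absurd hxy.symm (hvne0 _ (by decide))
        | exact absurd hxy (G.ne_of_adj hab)
        | exact absurd hxy.symm (G.ne_of_adj hab)
    apply hY5
    refine ⟨⟨g, ginj⟩, ?_⟩
    intro x y
    have e1 : G.Adj a (v i) := by have := (hA 0).2 (Or.inr (by decide)); simpa using this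
    have e2 : G.Adj a (v (i + 3)) := (hA 3).2 (Or.inl (by decide))
    have e3 : G.Adj b (v i) := by have := (hB 0).2 (Or.inl (by decide)); simpa using this
    have e4 : G.Adj b (v (i + 2)) := (hB 2).2 (Or.inr (by decide))
    have n1 : ¬ G.Adj a (v (i + 2)) := fun h => by
      have := (hA 2).1 h; revert this; decide
    have n2 : ¬ G.Adj a (v (i + 4)) := fun h => by
      have := (hA 4).1 h; revert this; decide
    have n3 : ¬ G.Adj b (v (i + 3)) := fun h => by
      have := (hB 3).1 h; revert this; decide
    have n4 : ¬ G.Adj b (v (i + 4)) := fun h => by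
      have := (hB 4).1 h; revert this; decide
    have c23 : G.Adj (v (i + 2)) (v (i + 3)) := (hADJ i 2 3).2 (Or.inr rfl)
    have c34 : G.Adj (v (i + 3)) (v (i + 4)) := (hADJ i 3 4).2 (Or.inr rfl)
    have c40 : G.Adj (v (i + 4)) (v i) := by
      have := (hADJ i 4 0).2 (Or.inr (by decide)); simpa using this
    have nc02 : ¬ G.Adj (v i) (v (i + 2)) := fun h => by
      have := (hADJ i 0 2).1 (by simpa using h); revert this; decide
    have nc03 : ¬ G.Adj (v i) (v (i + 3)) := fun h => by
      have := (hADJ i 0 3).1 (by simpa using h); revert this; decide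
    have nc24 : ¬ G.Adj (v (i + 2)) (v (i + 4)) := fun h => by
      have := (hADJ i 2 4).1 h; revert this; decide
    fin_cases x <;> fin_cases y <;>
      simp [y5WheelGraph, hg] <;>
      first
      | exact hab
      | exact hab.symm
      | assumption
      | exact e1.symm
      | exact e2.symm
      | exact e3.symm
      | exact e4.symm
      | exact c23.symm
      | exact c34.symm
      | exact c40.symm
      | exact fun h => n1 h.symm
      | exact fun h => n2 h.symm
      | exact fun h => n3 h.symm
      | exact fun h => n4 h.symm
      | exact fun h => nc02 h.symm
      | exact fun h => nc03 h.symm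
      | exact fun h => nc24 h.symm
end

section
/- Let G be a (P_5, HVN)-free graph containing an induced Y-5-wheel Σ (with 5-cycle v_1 v_2 v_3 v_4 v_5 and extra vertex x adjacent to v_1, v_2, v_4) but no induced T-5-wheel. Define R_i = {u ∈ V(G) : N_Σ(u) = {v_{i-1}, v_{i+1}}} (indices mod 5). If R_1 is nonempty, then R_2 is empty; moreover R_1 is anticomplete to R_3 and R_2 is anticomplete to R_5. -/
/-!
Each claim is witnessed by an induced `P₅` made of wheel vertices and vertices of the `Rᵢ`
(indices from `0`, hub `x`): for `u ∈ R₀`, `w ∈ R₂` the path `x v₀ v₄ u w`; for `u ∈ R₁`,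
`w ∈ R₄` the path `x v₁ v₂ u w`; and for `u ∈ R₀`, `w ∈ R₁` the path `x v₃ v₄ u w` if `uw` is
an edge, `u v₄ v₀ w v₂` otherwise.
-/

open SimpleGraph

/-- `v`, `x` form an induced Y-5-wheel: `v` is an induced 5-cycle and the extra vertex `x`
is adjacent to exactly `v 0`, `v 1`, `v 3` (the pattern v₁, v₂, v₄). -/
def IsInducedY5Wheel {V : Type*} (G : SimpleGraph V) (v : ZMod 5 → V) (x : V) : Prop :=
  IsInducedC5 G v ∧ (∀ i, x ≠ v i) ∧
    ∀ i : ZMod 5, G.Adj x (v i) ↔ (i = 0 ∨ i = 1 ∨ i = 3)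

/-- The neighbourhood of `u` on the wheel `Σ` with cycle vertices `v i` and hub `x`. -/
def wheelNbhd {V : Type*} (G : SimpleGraph V) (v : ZMod 5 → V) (x : V) (u : V) : Set V :=
  {w | (w = x ∨ ∃ i, w = v i) ∧ G.Adj u w}

lemma containsInduced_pathGraph_five_s16 {V : Type*} {G : SimpleGraph V} {a b c d e : V}
    (hab : G.Adj a b) (hbc : G.Adj b c) (hcd : G.Adj c d) (hde : G.Adj d e)
    (hac : ¬ G.Adj a c) (had : ¬ G.Adj a d) (hae : ¬ G.Adj a e)
    (hbd : ¬ G.Adj b d) (hbe : ¬ G.Adj b e) (hce : ¬ G.Adj c e) :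
    ContainsInduced G (pathGraph 5) := by
  have hinj : Function.Injective ![a, b, c, d, e] := by
    have : a ≠ c := fun h => had (h ▸ hcd)
    have : a ≠ d := fun h => hae (h ▸ hde)
    have : a ≠ e := fun h => hbe (h ▸ hab).symm
    have : b ≠ d := fun h => had (h ▸ hab)
    have : b ≠ e := fun h => hce (h ▸ hbc).symm
    have : c ≠ e := fun h => hbe (h ▸ hbc)
    have := hab.ne; have := hbc.ne; have := hcd.ne; have := hde.ne
    intro i j hij
    fin_cases i <;> fin_cases j <;> simp_all +decide
  refine ⟨⟨_, hinj⟩, fun i j => ?_⟩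
  change _ ↔ G.Adj (![a, b, c, d, e] i) (![a, b, c, d, e] j)
  fin_cases i <;> fin_cases j <;>
    simp +decide [pathGraph_adj, G.adj_comm, hab, hbc, hcd, hde, hac, had, hae, hbd, hbe, hce]

section Y5Wheel

variable {V : Type*} {G : SimpleGraph V} {v : ZMod 5 → V} {x : V}

/-- `wheelR G v x i` is the paper's `R_{i+1}`. -/
def wheelR (G : SimpleGraph V) (v : ZMod 5 → V) (x : V) (i : ZMod 5) : Set V :=
  {u | wheelNbhd G v x u = {v (i - 1), v (i + 1)}}

lemma adj_iff_of_mem_wheelR (hv : Function.Injective v) {u : V} {i : ZMod 5}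
    (hu : u ∈ wheelR G v x i) (j : ZMod 5) : G.Adj u (v j) ↔ j = i - 1 ∨ j = i + 1 := by
  have := Set.ext_iff.mp hu (v j)
  simp only [wheelNbhd, Set.mem_ofPred_eq, Set.mem_insert_iff, Set.mem_singleton_iff,
    hv.eq_iff] at this
  exact ⟨fun h => this.mp ⟨Or.inr ⟨j, rfl⟩, h⟩, fun h => (this.mpr h).2⟩

lemma not_adj_hub_of_mem_wheelR (hx : ∀ i, x ≠ v i) {u : V} {i : ZMod 5}
    (hu : u ∈ wheelR G v x i) : ¬ G.Adj x u := fun hxu => by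
  have : x ∈ wheelNbhd G v x u := ⟨Or.inl rfl, hxu.symm⟩
  rw [hu] at this
  rcases this with h | h <;> exact hx _ h

variable (hP5 : InducedFree G (pathGraph 5)) (hW : IsInducedY5Wheel G v x)
include hP5 hW

lemma not_adj_of_mem_wheelR_zero_of_mem_wheelR_two {u w : V}
    (hu : u ∈ wheelR G v x 0) (hw : w ∈ wheelR G v x 2) : ¬ G.Adj u w := by
  obtain ⟨⟨hv, hcyc⟩, hx, hxv⟩ := hW
  intro huw
  refine hP5 (containsInduced_pathGraph_five_s16 (a := x) (b := v 0) (c := v 4) ?_ ?_ ?_ huw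
    ?_ ?_ ?_ ?_ ?_ ?_)
  all_goals simp +decide [G.adj_comm, hcyc, hxv, adj_iff_of_mem_wheelR hv hu,
    adj_iff_of_mem_wheelR hv hw, not_adj_hub_of_mem_wheelR hx hu, not_adj_hub_of_mem_wheelR hx hw]

lemma not_adj_of_mem_wheelR_one_of_mem_wheelR_four {u w : V}
    (hu : u ∈ wheelR G v x 1) (hw : w ∈ wheelR G v x 4) : ¬ G.Adj u w := by
  obtain ⟨⟨hv, hcyc⟩, hx, hxv⟩ := hW
  intro huw
  refine hP5 (containsInduced_pathGraph_five_s16 (a := x) (b := v 1) (c := v 2) ?_ ?_ ?_ huw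
    ?_ ?_ ?_ ?_ ?_ ?_)
  all_goals simp +decide [G.adj_comm, hcyc, hxv, adj_iff_of_mem_wheelR hv hu,
    adj_iff_of_mem_wheelR hv hw, not_adj_hub_of_mem_wheelR hx hu, not_adj_hub_of_mem_wheelR hx hw]

lemma notMem_wheelR_one_of_mem_wheelR_zero {u w : V} (hu : u ∈ wheelR G v x 0) :
    w ∉ wheelR G v x 1 := by
  obtain ⟨⟨hv, hcyc⟩, hx, hxv⟩ := hW
  intro hw
  by_cases huw : G.Adj u w
  · refine hP5 (containsInduced_pathGraph_five_s16 (a := x) (b := v 3) (c := v 4) ?_ ?_ ?_ huw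
      ?_ ?_ ?_ ?_ ?_ ?_)
    all_goals simp +decide [G.adj_comm, hcyc, hxv, adj_iff_of_mem_wheelR hv hu,
      adj_iff_of_mem_wheelR hv hw, not_adj_hub_of_mem_wheelR hx hu, not_adj_hub_of_mem_wheelR hx hw]
  · refine hP5 (containsInduced_pathGraph_five_s16 (a := u) (b := v 4) (c := v 0) (d := w) (e := v 2)
      ?_ ?_ ?_ ?_ ?_ huw ?_ ?_ ?_ ?_)
    all_goals simp +decide [G.adj_comm, hcyc, adj_iff_of_mem_wheelR hv hu,
      adj_iff_of_mem_wheelR hv hw]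

end Y5Wheel

theorem y5wheel_r_properties_general {V : Type*} (G : SimpleGraph V)
    (hP5 : InducedFree G (pathGraph 5))
    (v : ZMod 5 → V) (x : V) (hW : IsInducedY5Wheel G v x)
    (R : ZMod 5 → Set V)
    (hR : ∀ i, R i = {u : V | wheelNbhd G v x u = {v (i - 1), v (i + 1)}}) :
    ((R 0).Nonempty → R 1 = ∅) ∧
    (∀ a ∈ R 0, ∀ b ∈ R 2, ¬ G.Adj a b) ∧
    (∀ a ∈ R 1, ∀ b ∈ R 4, ¬ G.Adj a b) := by
  obtain rfl : R = wheelR G v x := funext hR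
  exact ⟨fun ⟨_, hu⟩ => Set.eq_empty_of_forall_notMem fun _ =>
      notMem_wheelR_one_of_mem_wheelR_zero hP5 hW hu,
    fun _ hu _ hw => not_adj_of_mem_wheelR_zero_of_mem_wheelR_two hP5 hW hu hw,
    fun _ hu _ hw => not_adj_of_mem_wheelR_one_of_mem_wheelR_four hP5 hW hu hw⟩

/-- In a (P₅, HVN, T-5-wheel)-free graph with an induced Y-5-wheel: if `R 0` (the paper's
`R₁`) is nonempty then `R 1` (the paper's `R₂`) is empty; moreover `R 0` is anticomplete
to `R 2` and `R 1` is anticomplete to `R 4`. -/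
theorem y5wheel_r_properties {V : Type*} (G : SimpleGraph V)
    (hP5 : InducedFree G (pathGraph 5)) (hHVN : InducedFree G hvnGraph)
    (hT5 : InducedFree G t5WheelGraph)
    (v : ZMod 5 → V) (x : V) (hW : IsInducedY5Wheel G v x)
    (R : ZMod 5 → Set V)
    (hR : ∀ i, R i = {u : V | wheelNbhd G v x u = {v (i - 1), v (i + 1)}}) :
    ((R 0).Nonempty → R 1 = ∅) ∧
    (∀ a ∈ R 0, ∀ b ∈ R 2, ¬ G.Adj a b) ∧
    (∀ a ∈ R 1, ∀ b ∈ R 4, ¬ G.Adj a b) :=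
  y5wheel_r_properties_general G hP5 v x hW R hR
end
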